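/- Assume Condition (*) holds for M. Then for every s ≤ s*(λ,μ) one has E[e^{s A_x}] = G_M(log G₀(s;λ,μ))·e^{xΛ(s;λ,μ)} (an equality in (0,∞]), and for every s > s*(λ,μ) one has E[e^{s A_x}] = ∞. -/

import Mathlib

/-!
Split according to the value of `M`. On `{M = n + 1}` the absorption time is
`C + C₀ + ⋯ + C_{n-1}`, and the event and all summands are independent, so
`E[e^{s A_x}; M = n + 1] = P(M = n + 1) · E[e^{sC}] · G₀(s)ⁿ`. Summing over `n` gives
`E[e^{sC}] · E[G₀(s)^{M-1}] = E[G₀(s)^M] · e^{xΛ(s)}`. For `s > s*` already `A_x ≥ C` has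
infinite moment generating function.
-/

open MeasureTheory ProbabilityTheory Filter

/-- `s*(λ,μ) = (√λ − √μ)²/2`. -/
noncomputable def sStar (l m : ℝ) : ℝ := (Real.sqrt l - Real.sqrt m) ^ 2 / 2

/-- `G₀(s;λ,μ)`. -/
noncomputable def Gzero (s l m : ℝ) : ℝ :=
  (l + m - 2 * s - Real.sqrt ((l + m - 2 * s) ^ 2 - 4 * l * m)) / (2 * m)

/-- `Λ(s;λ,μ)`. -/
noncomputable def Lam (s l m : ℝ) : ℝ :=
  (l - m - Real.sqrt ((l + m - 2 * s) ^ 2 - 4 * l * m)) / 2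

theorem ENNReal.ofReal_exp_mul_add_sum {ι : Type*} (s a : ℝ) (t : Finset ι) (b : ι → ℝ) :
    ENNReal.ofReal (Real.exp (s * (a + ∑ i ∈ t, b i)))
      = ENNReal.ofReal (Real.exp (s * a)) * ∏ i ∈ t, ENNReal.ofReal (Real.exp (s * b i)) := by
  rw [mul_add, Real.exp_add, Finset.mul_sum, Real.exp_sum, ENNReal.ofReal_mul (Real.exp_nonneg _),
    ENNReal.ofReal_prod_of_nonneg fun i _ => (Real.exp_nonneg _)]

section

variable {Ω : Type*} [MeasurableSpace Ω] {μ : Measure Ω}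

theorem lintegral_ofReal_exp_pos [NeZero μ] {X : Ω → ℝ} (hX : Measurable X) (s : ℝ) :
    0 < ∫⁻ ω, ENNReal.ofReal (Real.exp (s * X ω)) ∂μ := by
  rw [lintegral_pos_iff_support (by fun_prop)]
  simp [Function.support, Real.exp_pos, NeZero.ne μ]

theorem lintegral_eq_tsum_setLIntegral_fiber {N : Ω → ℕ} (hN : Measurable N)
    (F : ℕ → Ω → ENNReal) :
    ∫⁻ ω, F (N ω) ω ∂μ = ∑' n, ∫⁻ ω in N ⁻¹' {n}, F n ω ∂μ := by
  have hfib : ∀ n, MeasurableSet (N ⁻¹' {n}) := fun n => hN (measurableSet_singleton n)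
  rw [← setLIntegral_univ, ← Set.preimage_univ (f := N), ← Set.iUnion_of_singleton,
    Set.preimage_iUnion, lintegral_iUnion hfib (pairwise_disjoint_fiber N)]
  exact tsum_congr fun n => setLIntegral_congr_fun (hfib n) fun ω hω => by rw [hω]

variable {C : Ω → ℝ} {M : Ω → ℕ} {Cs : ℕ → Ω → ℝ}
  (hindep : iIndepFun
    (fun i => if i = 0 then C else if i = 1 then (fun ω => (M ω : ℝ)) else Cs (i - 2)) μ)
  (hC : Measurable C) (hM : Measurable M) (hCs : ∀ i, Measurable (Cs i))
  {φ ψ : ℝ → ENNReal} (hφ : Measurable φ) (hψ : Measurable ψ)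

include hindep hC hM hCs hφ hψ in
theorem setLIntegral_preimage_mul_prod_of_iIndepFun (S : Set ℕ) (n : ℕ) :
    ∫⁻ ω in M ⁻¹' S, φ (C ω) * ∏ i ∈ Finset.range n, ψ (Cs i ω) ∂μ
      = μ (M ⁻¹' S) * ((∫⁻ ω, φ (C ω) ∂μ) * ∏ i ∈ Finset.range n, ∫⁻ ω, ψ (Cs i ω) ∂μ) := by
  have hS : MeasurableSet ((Nat.cast : ℕ → ℝ) '' S) := (S.to_countable.image _).measurableSet
  have hMS : MeasurableSet (M ⁻¹' S) := hM .of_discrete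
  have hindicator (ω : Ω) :
      ((Nat.cast : ℕ → ℝ) '' S).indicator 1 (M ω : ℝ) = (M ⁻¹' S).indicator (1 : Ω → ENNReal) ω := by
    by_cases h : M ω ∈ S <;> simp [h]
  -- `g j` is applied to the `j`-th member of the family `C, M, Cs 0, Cs 1, …`
  set g : ℕ → ℝ → ENNReal :=
    fun j => if j = 0 then φ else if j = 1 then ((Nat.cast : ℕ → ℝ) '' S).indicator 1 else ψ
  have hg : ∀ j, Measurable (g j) := fun j => by
    simp only [g]; split_ifs
    exacts [hφ, measurable_one.indicator hS, hψ]
  have hprod := lintegral_prod_eq_prod_lintegral_of_indepFun (Finset.range (n + 2)) _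
    (hindep.comp g hg) fun j => (hg j).comp (by split_ifs; exacts [hC, by fun_prop, hCs _])
  simp only [Finset.prod_range_succ', Function.comp_apply, g, Nat.add_eq_zero_iff, one_ne_zero,
    and_false, ↓reduceIte, Nat.add_eq_right, Nat.reduceSubDiff, hindicator,
    lintegral_indicator_one hMS] at hprod
  rw [← lintegral_indicator hMS]
  calc _ = ∫⁻ ω, (∏ i ∈ Finset.range n, ψ (Cs i ω)) * (M ⁻¹' S).indicator 1 ω * φ (C ω) ∂μ :=
        lintegral_congr fun ω => by
          by_cases h : ω ∈ M ⁻¹' S <;> simp [h, mul_comm]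
    _ = _ := by rw [hprod]; ring

include hindep hC hM hCs hφ hψ in
theorem lintegral_mul_prod_range_eq_mul_lintegral_pow (hident : ∀ i, μ.map (Cs i) = μ.map (Cs 0))
    (f : ℕ → ℕ) :
    ∫⁻ ω, φ (C ω) * ∏ i ∈ Finset.range (f (M ω)), ψ (Cs i ω) ∂μ
      = (∫⁻ ω, φ (C ω) ∂μ) * ∫⁻ ω, (∫⁻ ω', ψ (Cs 0 ω') ∂μ) ^ f (M ω) ∂μ := by
  set z := ∫⁻ ω', ψ (Cs 0 ω') ∂μ
  have hz : ∀ i, ∫⁻ ω, ψ (Cs i ω) ∂μ = z := fun i => by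
    rw [← lintegral_map hψ (hCs i), hident, lintegral_map hψ (hCs 0)]
  have hN : Measurable (f ∘ M) := (measurable_from_top (f := f)).comp hM
  calc _ = ∑' n, ∫⁻ ω in (f ∘ M) ⁻¹' {n}, φ (C ω) * ∏ i ∈ Finset.range n, ψ (Cs i ω) ∂μ :=
        lintegral_eq_tsum_setLIntegral_fiber hN fun n ω => φ (C ω) * ∏ i ∈ Finset.range n, ψ (Cs i ω)
    _ = ∑' n, (∫⁻ ω, φ (C ω) ∂μ) * ∫⁻ ω in (f ∘ M) ⁻¹' {n}, z ^ n ∂μ := by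
        refine tsum_congr fun n => ?_
        rw [Set.preimage_comp, setLIntegral_preimage_mul_prod_of_iIndepFun hindep hC hM hCs hφ hψ,
          setLIntegral_const]
        simp only [hz, Finset.prod_const, Finset.card_range]
        ring
    _ = _ := by
        rw [ENNReal.tsum_mul_left, ← lintegral_eq_tsum_setLIntegral_fiber hN fun n _ => z ^ n]
        rfl

end

theorem mgf_absorption_time_general
    {Ω : Type*} [MeasurableSpace Ω] (P : Measure Ω) [IsProbabilityMeasure P]
    (l m x : ℝ)
    (C : Ω → ℝ) (M : Ω → ℕ) (Cs : ℕ → Ω → ℝ)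
    (hCmeas : Measurable C) (hMmeas : Measurable M) (hCsmeas : ∀ i, Measurable (Cs i))
    (hMpos : ∀ ω, 1 ≤ M ω)
    (hCs_nonneg : ∀ i ω, 0 ≤ Cs i ω)
    (hident : ∀ i, P.map (Cs i) = P.map (Cs 0))
    (hindep : iIndepFun
      (fun i => if i = 0 then C else if i = 1 then (fun ω => (M ω : ℝ)) else Cs (i - 2)) P)
    -- mgf of the i.i.d. interarrival times C₀
    (hCs_mgf_le : ∀ s ≤ sStar l m,
      ∫⁻ ω, ENNReal.ofReal (Real.exp (s * Cs 0 ω)) ∂P = ENNReal.ofReal (Gzero s l m))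
    -- mgf of the first-passage time C (= C_x)
    (hC_mgf_le : ∀ s ≤ sStar l m,
      ∫⁻ ω, ENNReal.ofReal (Real.exp (s * C ω)) ∂P
        = ENNReal.ofReal (Gzero s l m * Real.exp (x * Lam s l m)))
    (hC_mgf_gt : ∀ s > sStar l m,
      ∫⁻ ω, ENNReal.ofReal (Real.exp (s * C ω)) ∂P = ⊤) :
    (∀ s ≤ sStar l m,
      ∫⁻ ω, ENNReal.ofReal (Real.exp (s *
          (C ω + if 1 < M ω then ∑ i ∈ Finset.range (M ω - 1), Cs i ω else 0))) ∂P
        = (∫⁻ ω, ENNReal.ofReal (Real.exp (Real.log (Gzero s l m) * (M ω : ℝ))) ∂P)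
            * ENNReal.ofReal (Real.exp (x * Lam s l m)))
    ∧ (∀ s > sStar l m,
      ∫⁻ ω, ENNReal.ofReal (Real.exp (s *
          (C ω + if 1 < M ω then ∑ i ∈ Finset.range (M ω - 1), Cs i ω else 0))) ∂P = ⊤) := by
  have hsum (ω : Ω) : (if 1 < M ω then ∑ i ∈ Finset.range (M ω - 1), Cs i ω else 0)
      = ∑ i ∈ Finset.range (M ω - 1), Cs i ω := by
    split_ifs with h
    · rfl
    · simp [Nat.sub_eq_zero_of_le (not_lt.1 h)]
  refine ⟨fun s hs => ?_, fun s hs => ?_⟩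
  · have hexp : Measurable fun t : ℝ => ENNReal.ofReal (Real.exp (s * t)) := by fun_prop
    have hG₀ : 0 < Gzero s l m := by
      simpa [hCs_mgf_le s hs] using lintegral_ofReal_exp_pos (μ := P) (hCsmeas 0) s
    have hpow (ω : Ω) : ENNReal.ofReal (Real.exp (Real.log (Gzero s l m) * M ω))
        = ENNReal.ofReal (Gzero s l m) * ENNReal.ofReal (Gzero s l m) ^ (M ω - 1) := by
      rw [mul_comm, Real.exp_nat_mul, Real.exp_log hG₀, ENNReal.ofReal_pow hG₀.le, ← pow_succ',
        Nat.sub_add_cancel (hMpos ω)]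
    have hwald := lintegral_mul_prod_range_eq_mul_lintegral_pow hindep hCmeas hMmeas hCsmeas
      hexp hexp hident (· - 1)
    rw [hC_mgf_le s hs, hCs_mgf_le s hs] at hwald
    simp_rw [hsum, ENNReal.ofReal_exp_mul_add_sum, hwald, hpow]
    rw [lintegral_const_mul' _ _ ENNReal.ofReal_ne_top, ENNReal.ofReal_mul hG₀.le]
    ring
  · have hs₀ : 0 < s := lt_of_le_of_lt (by unfold sStar; positivity) hs
    refine eq_top_iff.2 (hC_mgf_gt s hs ▸ lintegral_mono fun ω => ?_)
    gcongr
    rw [hsum]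
    exact le_add_of_nonneg_right (Finset.sum_nonneg fun i _ => hCs_nonneg i ω)

/-- Under Condition (*) for `M`, for every `s ≤ s*(λ,μ)` one has
`E[e^{s A_x}] = G_M(log G₀(s;λ,μ))·e^{xΛ(s;λ,μ)}` (in `(0,∞]`, i.e. in `ℝ≥0∞`), and
`E[e^{s A_x}] = ∞` for `s > s*(λ,μ)`, where `A_x = C + 1_{M>1}·Σ_{i=1}^{M−1} Cᵢ`. -/
theorem mgf_absorption_time
    {Ω : Type*} [MeasurableSpace Ω] (P : Measure Ω) [IsProbabilityMeasure P]
    (l m x : ℝ) (hlm : m < l) (hm : 0 < m) (hx : 0 < x)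
    (C : Ω → ℝ) (M : Ω → ℕ) (Cs : ℕ → Ω → ℝ)
    (hCmeas : Measurable C) (hMmeas : Measurable M) (hCsmeas : ∀ i, Measurable (Cs i))
    (hMpos : ∀ ω, 1 ≤ M ω)
    (hC_nonneg : ∀ ω, 0 ≤ C ω) (hCs_nonneg : ∀ i ω, 0 ≤ Cs i ω)
    (hident : ∀ i, P.map (Cs i) = P.map (Cs 0))
    (hindep : iIndepFun
      (fun i => if i = 0 then C else if i = 1 then (fun ω => (M ω : ℝ)) else Cs (i - 2)) P)
    -- mgf of the i.i.d. interarrival times C₀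
    (hCs_mgf_le : ∀ s ≤ sStar l m,
      ∫⁻ ω, ENNReal.ofReal (Real.exp (s * Cs 0 ω)) ∂P = ENNReal.ofReal (Gzero s l m))
    (hCs_mgf_gt : ∀ s > sStar l m,
      ∫⁻ ω, ENNReal.ofReal (Real.exp (s * Cs 0 ω)) ∂P = ⊤)
    -- mgf of the first-passage time C (= C_x)
    (hC_mgf_le : ∀ s ≤ sStar l m,
      ∫⁻ ω, ENNReal.ofReal (Real.exp (s * C ω)) ∂P
        = ENNReal.ofReal (Gzero s l m * Real.exp (x * Lam s l m)))
    (hC_mgf_gt : ∀ s > sStar l m,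
      ∫⁻ ω, ENNReal.ofReal (Real.exp (s * C ω)) ∂P = ⊤)
    -- Condition (*): G_M is finite at some positive point
    (hcond : ∃ r : ℝ, 0 < r ∧
      ∫⁻ ω, ENNReal.ofReal (Real.exp (r * (M ω : ℝ))) ∂P < ⊤) :
    (∀ s ≤ sStar l m,
      ∫⁻ ω, ENNReal.ofReal (Real.exp (s *
          (C ω + if 1 < M ω then ∑ i ∈ Finset.range (M ω - 1), Cs i ω else 0))) ∂P
        = (∫⁻ ω, ENNReal.ofReal (Real.exp (Real.log (Gzero s l m) * (M ω : ℝ))) ∂P)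
            * ENNReal.ofReal (Real.exp (x * Lam s l m)))
    ∧ (∀ s > sStar l m,
      ∫⁻ ω, ENNReal.ofReal (Real.exp (s *
          (C ω + if 1 < M ω then ∑ i ∈ Finset.range (M ω - 1), Cs i ω else 0))) ∂P = ⊤) :=
  mgf_absorption_time_general P l m x C M Cs hCmeas hMmeas hCsmeas hMpos hCs_nonneg hident hindep
    hCs_mgf_le hC_mgf_le hC_mgf_gt
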